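/- Let C > 0 and let Q(z) = ∏ᵢ₌₁ⁿ (z − zᵢ) be a monic polynomial of degree n with all roots in the closed unit disk. Set rₙ = n^{−3/4}, and suppose: (i) 0 < |Q′(z₁)| ≤ e^{−√n}; and (ii) for every 2 ≤ k ≤ n, |Q^{(k)}(z₁)|·rₙ^k/k! ≤ n²·binom(n−1, k−1)·(C·n^{−3/4})^{k−1}·|Q′(z₁)|·rₙ. Then for all z with |z − z₁| = rₙ, |Q(z)| ≤ n²·e^{−√n}·(1 + C·n^{−3/4})^{n−1}; in particular, for all n sufficiently large (depending only on C) this bound is < 1, and the closed ball of radius rₙ around z₁ is contained in Λ(Q) = {z : |Q(z)| < 1}. -/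

import Mathlib

/-! Since `Q(z₁) = 0`, Taylor's formula at `z₁` bounds `|Q(w)|` for `|w - z₁| ≤ rₙ` by
`∑_{k ≥ 1} |Q⁽ᵏ⁾(z₁)| rₙᵏ / k!`. The hypotheses (and `n² ≥ 1` for `k = 1`) bound the `k`-th term
by `n² |Q'(z₁)| rₙ · binom(n-1, k-1) (C rₙ)^(k-1)`, and the binomial theorem sums these to
`n² |Q'(z₁)| rₙ (1 + C rₙ)^(n-1) ≤ n² e^{-√n} (1 + C rₙ)^(n-1)`. Writing `x = n^{1/4}`, so that
`n rₙ = x`, `1 + t ≤ eᵗ` bounds this by `x⁸ e^{-x² + C x}`, which tends to `0`. -/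

open Filter Polynomial Finset Nat

namespace Polynomial

section NormedField

variable {𝕜 : Type*} [NontriviallyNormedField 𝕜]

theorem iteratedDeriv_eval (P : 𝕜[X]) (k : ℕ) :
    iteratedDeriv k (fun x => P.eval x) = fun x => (derivative^[k] P).eval x := by
  induction k with
  | zero => rfl
  | succ k ih =>
    funext x
    rw [iteratedDeriv_succ, ih, Function.iterate_succ_apply']
    exact Polynomial.deriv _

variable [CharZero 𝕜]

theorem eval_hasseDeriv (P : 𝕜[X]) (k : ℕ) (a : 𝕜) :
    (hasseDeriv k P).eval a = iteratedDeriv k (fun x => P.eval x) a / k ! := by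
  rw [iteratedDeriv_eval, ← factorial_smul_hasseDeriv,
    eq_div_iff (Nat.cast_ne_zero.2 (factorial_ne_zero k))]
  simp [nsmul_eq_mul, mul_comm]

theorem eval_eq_sum_iteratedDeriv (P : 𝕜[X]) {n : ℕ} (hP : P.natDegree ≤ n) (a w : 𝕜) :
    P.eval w = ∑ k ∈ range (n + 1), iteratedDeriv k (fun x => P.eval x) a / k ! * (w - a) ^ k := by
  rw [← taylor_eval_sub a, eval_eq_sum_range' (n := n + 1) (by rw [natDegree_taylor]; omega)]
  simp [taylor_coeff, eval_hasseDeriv]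

end NormedField

section RCLike

variable {𝕜 : Type*} [RCLike 𝕜]

theorem norm_eval_le_of_norm_iteratedDeriv_le {P : 𝕜[X]} {n : ℕ} (hn : 1 ≤ n)
    (hP : P.natDegree ≤ n) {a w : 𝕜} (ha : P.IsRoot a) {r c A : ℝ} (hw : ‖w - a‖ ≤ r)
    (hk : ∀ k, 1 ≤ k → k ≤ n →
      ‖iteratedDeriv k (fun x => P.eval x) a‖ * r ^ k / k ! ≤
        A * (n - 1).choose (k - 1) * c ^ (k - 1)) :
    ‖P.eval w‖ ≤ A * (1 + c) ^ (n - 1) := by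
  obtain ⟨m, rfl⟩ : ∃ m, n = m + 1 := ⟨n - 1, by omega⟩
  set f := fun x => P.eval x
  calc ‖P.eval w‖
      = ‖∑ k ∈ range (m + 1), iteratedDeriv (k + 1) f a / (k + 1)! * (w - a) ^ (k + 1)‖ := by
        rw [eval_eq_sum_iteratedDeriv P hP a w, sum_range_succ', iteratedDeriv_zero]
        simp [f, ha.eq_zero]
    _ ≤ ∑ k ∈ range (m + 1), ‖iteratedDeriv (k + 1) f a‖ * r ^ (k + 1) / (k + 1)! := by
        refine (norm_sum_le _ _).trans (sum_le_sum fun k _ => ?_)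
        rw [norm_mul, norm_div, norm_pow, RCLike.norm_natCast, div_mul_eq_mul_div]
        gcongr
    _ ≤ ∑ k ∈ range (m + 1), A * (c ^ k * 1 ^ (m - k) * m.choose k) :=
        sum_le_sum fun k hk' => by
          simpa [mul_comm, mul_left_comm, mul_assoc] using
            hk (k + 1) (by omega) (by simpa using mem_range.mp hk')
    _ = A * (1 + c) ^ m := by rw [← mul_sum, ← add_pow, add_comm]

theorem norm_eval_le_of_norm_deriv_le {P : 𝕜[X]} {n : ℕ} (hn : 1 ≤ n)
    (hP : P.natDegree ≤ n) {a w : 𝕜} (ha : P.IsRoot a) {r c ε M : ℝ} (hr : r ≤ 1) (hc : 0 ≤ c)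
    (hM : 1 ≤ M) (hε : ‖deriv (fun x => P.eval x) a‖ ≤ ε)
    (hk : ∀ k, 2 ≤ k → k ≤ n →
      ‖iteratedDeriv k (fun x => P.eval x) a‖ * r ^ k / k ! ≤
        M * (n - 1).choose (k - 1) * c ^ (k - 1) * (‖deriv (fun x => P.eval x) a‖ * r))
    (hw : ‖w - a‖ ≤ r) :
    ‖P.eval w‖ ≤ M * ε * (1 + c) ^ (n - 1) := by
  set d := ‖deriv (fun x => P.eval x) a‖
  have hdr₀ : 0 ≤ d * r := mul_nonneg (norm_nonneg _) ((norm_nonneg _).trans hw)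
  calc ‖P.eval w‖ ≤ M * (d * r) * (1 + c) ^ (n - 1) := by
        refine norm_eval_le_of_norm_iteratedDeriv_le hn hP ha hw fun k hk₁ hkn => ?_
        rcases hk₁.eq_or_lt with rfl | hk₂
        · simp only [iteratedDeriv_one, pow_one, factorial_one, cast_one, div_one, Nat.sub_self,
            choose_zero_right, pow_zero, mul_one]
          exact le_mul_of_one_le_left hdr₀ hM
        · exact (hk k hk₂ hkn).trans_eq (by ring)
    _ ≤ M * ε * (1 + c) ^ (n - 1) := by
        have hdr : d * r ≤ ε := (mul_le_of_le_one_right (norm_nonneg _) hr).trans hε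
        have : 0 ≤ (1 + c) ^ (n - 1) := pow_nonneg (by linarith) _
        gcongr

end RCLike

end Polynomial

open Real

theorem one_add_mul_rpow_pow_le_exp {C : ℝ} (hC : 0 ≤ C) (n : ℕ) :
    (1 + C * (n : ℝ) ^ (-(3 : ℝ) / 4)) ^ (n - 1) ≤ exp (C * (n : ℝ) ^ (1 / 4 : ℝ)) := by
  set q := (n : ℝ) ^ (-(3 : ℝ) / 4)
  have hq : (n : ℝ) * q = (n : ℝ) ^ (1 / 4 : ℝ) := by
    rw [← rpow_one_add' n.cast_nonneg (by norm_num)]; norm_num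
  calc (1 + C * q) ^ (n - 1) ≤ exp (C * q) ^ (n - 1) := by
        gcongr; linarith [add_one_le_exp (C * q)]
    _ = exp ((n - 1 : ℕ) * (C * q)) := (exp_nat_mul _ _).symm
    _ ≤ exp (C * (n : ℝ) ^ (1 / 4 : ℝ)) := by
        rw [exp_le_exp, ← hq]
        have : ((n - 1 : ℕ) : ℝ) ≤ n := by exact_mod_cast n.sub_le 1
        have : 0 ≤ C * q := by positivity
        nlinarith

theorem eventually_sq_mul_exp_neg_sqrt_mul_one_add_pow_lt_one {C : ℝ} (hC : 0 ≤ C) :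
    ∀ᶠ n : ℕ in atTop,
      (n : ℝ) ^ 2 * exp (-√n) * (1 + C * (n : ℝ) ^ (-(3 : ℝ) / 4)) ^ (n - 1) < 1 := by
  have hx : Tendsto (fun n : ℕ => (n : ℝ) ^ (1 / 4 : ℝ)) atTop atTop :=
    (tendsto_rpow_atTop (by norm_num)).comp tendsto_natCast_atTop_atTop
  have hsmall : ∀ᶠ x in atTop, x ^ 8 * exp (-x) < 1 :=
    (tendsto_pow_mul_exp_neg_atTop_nhds_zero 8).eventually (gt_mem_nhds one_pos)
  filter_upwards [hx.eventually hsmall, hx.eventually_ge_atTop (C + 1)] with n hlt hCx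
  set x := (n : ℝ) ^ (1 / 4 : ℝ)
  have hn₂ : (n : ℝ) ^ 2 = x ^ 8 := by
    rw [← rpow_natCast x, ← rpow_mul n.cast_nonneg, ← rpow_natCast]; norm_num
  have hsqrt : √n = x ^ 2 := by
    rw [sqrt_eq_rpow, ← rpow_natCast x, ← rpow_mul n.cast_nonneg]; norm_num
  calc (n : ℝ) ^ 2 * exp (-√n) * (1 + C * (n : ℝ) ^ (-(3 : ℝ) / 4)) ^ (n - 1)
      ≤ x ^ 8 * exp (-x ^ 2) * exp (C * x) := by
        rw [hn₂, hsqrt]; gcongr; exact one_add_mul_rpow_pow_le_exp hC n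
    _ = x ^ 8 * exp (-x) * exp (-(x * (x - (C + 1)))) := by
        rw [mul_assoc, mul_assoc, ← exp_add, ← exp_add]; ring_nf
    _ ≤ x ^ 8 * exp (-x) := by
        refine mul_le_of_le_one_right (by positivity) (exp_le_one_iff.2 ?_)
        nlinarith
    _ < 1 := hlt

theorem norm_prod_sub_le {n : ℕ} (hn : 1 ≤ n) {z : ℕ → ℂ} {Q : ℂ → ℂ}
    (hQ : Q = fun w => ∏ i ∈ Icc 1 n, (w - z i)) {C ε : ℝ} (hC : 0 ≤ C)
    (hε : ‖deriv Q (z 1)‖ ≤ ε)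
    (hk : ∀ k, 2 ≤ k → k ≤ n →
      ‖iteratedDeriv k Q (z 1)‖ * ((n : ℝ) ^ (-(3 : ℝ) / 4)) ^ k / k ! ≤
        n ^ 2 * (n - 1).choose (k - 1) * (C * (n : ℝ) ^ (-(3 : ℝ) / 4)) ^ (k - 1) *
          (‖deriv Q (z 1)‖ * (n : ℝ) ^ (-(3 : ℝ) / 4)))
    {w : ℂ} (hw : ‖w - z 1‖ ≤ (n : ℝ) ^ (-(3 : ℝ) / 4)) :
    ‖Q w‖ ≤ n ^ 2 * ε * (1 + C * (n : ℝ) ^ (-(3 : ℝ) / 4)) ^ (n - 1) := by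
  set P : ℂ[X] := ∏ i ∈ Icc 1 n, (X - Polynomial.C (z i))
  obtain rfl : Q = fun w => P.eval w := by simp [hQ, P, eval_prod]
  have hroot : P.IsRoot (z 1) :=
    (isRoot_prod _ _ _).2 ⟨1, mem_Icc.2 ⟨le_rfl, hn⟩, root_X_sub_C.2 rfl⟩
  have hn₁ : (1 : ℝ) ≤ n := by exact_mod_cast hn
  exact norm_eval_le_of_norm_deriv_le hn (by simp [P]) hroot
    (rpow_le_one_of_one_le_of_nonpos hn₁ (by norm_num)) (by positivity) (one_le_pow₀ hn₁) hε hk hw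

theorem ball_inside_lemniscate_criterion (C : ℝ) (hC : 0 < C) :
    (∀ n : ℕ, 1 ≤ n → ∀ z : ℕ → ℂ, ∀ Q : ℂ → ℂ,
      Q = (fun w => ∏ i ∈ Finset.Icc 1 n, (w - z i)) →
      (∀ i ∈ Finset.Icc 1 n, ‖z i‖ ≤ 1) →
      0 < ‖deriv Q (z 1)‖ →
      ‖deriv Q (z 1)‖ ≤ Real.exp (-Real.sqrt n) →
      (∀ k, 2 ≤ k → k ≤ n →
        ‖iteratedDeriv k Q (z 1)‖ * ((n : ℝ) ^ (-(3 : ℝ)/4)) ^ k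
            / (Nat.factorial k : ℝ) ≤
          (n : ℝ) ^ 2 * (Nat.choose (n - 1) (k - 1) : ℝ) *
            (C * (n : ℝ) ^ (-(3 : ℝ)/4)) ^ (k - 1) *
            (‖deriv Q (z 1)‖ * (n : ℝ) ^ (-(3 : ℝ)/4))) →
      ∀ w : ℂ, ‖w - z 1‖ = (n : ℝ) ^ (-(3 : ℝ)/4) →
        ‖Q w‖ ≤
          (n : ℝ) ^ 2 * Real.exp (-Real.sqrt n) * (1 + C * (n : ℝ) ^ (-(3 : ℝ)/4)) ^ (n - 1)) ∧
    (∀ᶠ n : ℕ in atTop,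
      (n : ℝ) ^ 2 * Real.exp (-Real.sqrt n) * (1 + C * (n : ℝ) ^ (-(3 : ℝ)/4)) ^ (n - 1) < 1 ∧
      ∀ z : ℕ → ℂ, ∀ Q : ℂ → ℂ,
        Q = (fun w => ∏ i ∈ Finset.Icc 1 n, (w - z i)) →
        (∀ i ∈ Finset.Icc 1 n, ‖z i‖ ≤ 1) →
        0 < ‖deriv Q (z 1)‖ →
        ‖deriv Q (z 1)‖ ≤ Real.exp (-Real.sqrt n) →
        (∀ k, 2 ≤ k → k ≤ n →
          ‖iteratedDeriv k Q (z 1)‖ * ((n : ℝ) ^ (-(3 : ℝ)/4)) ^ k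
              / (Nat.factorial k : ℝ) ≤
            (n : ℝ) ^ 2 * (Nat.choose (n - 1) (k - 1) : ℝ) *
              (C * (n : ℝ) ^ (-(3 : ℝ)/4)) ^ (k - 1) *
              (‖deriv Q (z 1)‖ * (n : ℝ) ^ (-(3 : ℝ)/4))) →
        Metric.closedBall (z 1) ((n : ℝ) ^ (-(3 : ℝ)/4)) ⊆
          {w : ℂ | ‖Q w‖ < 1}) := by
  refine ⟨fun n hn z Q hQ _ _ hε hk w hw => norm_prod_sub_le hn hQ hC.le hε hk hw.le, ?_⟩
  filter_upwards [eventually_sq_mul_exp_neg_sqrt_mul_one_add_pow_lt_one hC.le,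
    eventually_ge_atTop 1] with n hlt hn
  refine ⟨hlt, fun z Q hQ _ _ hε hk w hw => ?_⟩
  rw [Metric.mem_closedBall, dist_eq_norm] at hw
  exact (norm_prod_sub_le hn hQ hC.le hε hk hw).trans_lt hlt
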